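/- Let n ≥ 3 and τ ≥ 2 be integers. Define the n×n matrix P* (the optimal star-graph strategy with center node 1) by P*(1,1) = 0, P*(1,j) = 1/(n−1) for j ∈ {2,…,n}, P*(j,1) = 1 for j ∈ {2,…,n}, and P*(j,k) = 0 for j ∈ {2,…,n}, k ≠ 1. Then P* is row-stochastic and the minimum capture probability satisfies min_{i,j ∈ {1,…,n}} Σ_{t=1}^{τ} F*_t(i,j) = 1 − (1 − 1/(n−1))^{⌊τ/2⌋}, which equals 1 − (1 − 1/(n−1))^{(τ−1)/2} when τ is odd and 1 − (1 − 1/(n−1))^{τ/2} when τ is even. -/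

import Mathlib

/-!
Write `C τ i j` for the capture probability and `p = 1/(n-1)`. First-step analysis gives
`C (τ+1) i j = P i j + ∑_{k ≠ j} P i k · C τ k j`. On the star with centre `c` and a leaf `j`,
a leaf only steps to `c`, so `C (τ+1) i j = C τ c j` for every leaf `i`; from the centre,
`C (τ+2) c j = p + (1 - p) C τ c j`, because the mass `1 - p` that misses `j` lands on leaves
that are one step behind the centre. Thus `1 - C` decays by the factor `1 - p` every two steps,
which gives `1 - (1 - p)^⌊τ/2⌋` between leaves. Every other pair does at least as well: the
centre is reached within two steps with probability `1`, and the centre is ahead of any leaf.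
-/

/-- First-hitting-time probability matrices: `hitF P t` is `F_{t+1}`, i.e.
`F_1 = P` and `F_{k+1} = P (F_k - Diag(F_k))`. -/
def hitF {α : Type*} [Fintype α] [DecidableEq α] (P : Matrix α α ℝ) : ℕ → Matrix α α ℝ
  | 0 => P
  | k + 1 => P * (hitF P k - Matrix.diagonal fun i => hitF P k i i)

open Finset

section HittingTimes

variable {α : Type*} [Fintype α] [DecidableEq α]

theorem hitF_succ_apply (P : Matrix α α ℝ) (t : ℕ) (i j : α) :
    hitF P (t + 1) i j = ∑ k ∈ univ.erase j, P i k * hitF P t k j := by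
  rw [hitF.eq_2, Matrix.mul_apply, ← sum_erase (a := j) _ (by simp)]
  refine sum_congr rfl fun k hk => ?_
  rw [Matrix.sub_apply, Matrix.diagonal_apply_ne _ (ne_of_mem_erase hk), sub_zero]

/-- `captureProb P τ i j` is `ℙ(T_ij ≤ τ)`. -/
def captureProb (P : Matrix α α ℝ) (τ : ℕ) (i j : α) : ℝ :=
  ∑ t ∈ range τ, hitF P t i j

theorem captureProb_succ (P : Matrix α α ℝ) (τ : ℕ) (i j : α) :
    captureProb P (τ + 1) i j = P i j + ∑ k ∈ univ.erase j, P i k * captureProb P τ k j := by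
  simp only [captureProb, sum_range_succ', hitF_succ_apply, mul_sum]
  rw [sum_comm, add_comm]
  rfl

end HittingTimes

section Star

variable {α : Type*} [Fintype α]

variable (α) in
noncomputable def leafProb : ℝ := 1 / ((Fintype.card α : ℝ) - 1)

theorem leafProb_nonneg [Nonempty α] : 0 ≤ leafProb α := by
  have : (1 : ℝ) ≤ Fintype.card α := by exact_mod_cast Fintype.card_pos
  unfold leafProb
  exact div_nonneg zero_le_one (by linarith)

theorem leafProb_le_one [Nontrivial α] : leafProb α ≤ 1 := by
  have : (2 : ℝ) ≤ Fintype.card α := by exact_mod_cast Fintype.one_lt_card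
  unfold leafProb
  rw [div_le_one (by linarith)]
  linarith

theorem card_sub_one_mul_leafProb [Nontrivial α] :
    ((Fintype.card α : ℝ) - 1) * leafProb α = 1 := by
  have : (2 : ℝ) ≤ Fintype.card α := by exact_mod_cast Fintype.one_lt_card
  rw [leafProb, mul_one_div, div_self (by linarith)]

variable [DecidableEq α]

noncomputable def starMatrix (c : α) : Matrix α α ℝ := fun i j =>
  if i = c then (if j = c then 0 else leafProb α) else (if j = c then 1 else 0)

theorem starMatrix_nonneg (c i j : α) : 0 ≤ starMatrix c i j := by
  have : Nonempty α := ⟨c⟩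
  unfold starMatrix
  split_ifs <;> simp [leafProb_nonneg]

theorem starMatrix_row_sum [Nontrivial α] (c i : α) : ∑ j, starMatrix c i j = 1 := by
  by_cases hi : i = c
  · simp [starMatrix, hi, sum_ite, filter_ne', Nat.cast_sub Fintype.card_pos,
      card_sub_one_mul_leafProb]
  · simp [starMatrix, hi]

variable {c : α}

theorem captureProb_starMatrix_leaf_center {i : α} (hi : i ≠ c) (τ : ℕ) :
    captureProb (starMatrix c) (τ + 1) i c = 1 := by
  simp [captureProb_succ, starMatrix, hi]

theorem captureProb_starMatrix_center_center [Nontrivial α] (τ : ℕ) :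
    captureProb (starMatrix c) (τ + 2) c c = 1 := by
  rw [captureProb_succ, sum_congr rfl fun k hk =>
    by rw [captureProb_starMatrix_leaf_center (ne_of_mem_erase hk), mul_one]]
  rw [sum_erase _ (by simp [starMatrix]), starMatrix_row_sum]
  simp [starMatrix]

theorem captureProb_starMatrix_leaf_succ {i j : α} (hi : i ≠ c) (hj : j ≠ c) (τ : ℕ) :
    captureProb (starMatrix c) (τ + 1) i j = captureProb (starMatrix c) τ c j := by
  simp [captureProb_succ, starMatrix, hi, hj, Ne.symm hj]

theorem captureProb_starMatrix_center_leaf_add_two [Nontrivial α] {j : α} (hj : j ≠ c) (τ : ℕ) :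
    captureProb (starMatrix c) (τ + 2) c j =
      leafProb α + (1 - leafProb α) * captureProb (starMatrix c) τ c j := by
  have hterm : ∀ k ∈ univ.erase j, starMatrix c c k * captureProb (starMatrix c) (τ + 1) k j =
      starMatrix c c k * captureProb (starMatrix c) τ c j := by
    intro k _
    by_cases hk : k = c
    · simp [hk, starMatrix]
    · rw [captureProb_starMatrix_leaf_succ hk hj]
  rw [captureProb_succ, sum_congr rfl hterm, ← sum_mul, sum_erase_eq_sub (mem_univ j),
    starMatrix_row_sum]
  simp [starMatrix, hj]

theorem captureProb_starMatrix_center_leaf [Nontrivial α] {j : α} (hj : j ≠ c) (τ : ℕ) :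
    captureProb (starMatrix c) τ c j = 1 - (1 - leafProb α) ^ ((τ + 1) / 2) := by
  induction τ using Nat.twoStepInduction with
  | zero => simp [captureProb]
  | one => simp [captureProb, hitF, starMatrix, hj]
  | more τ ih _ =>
    rw [captureProb_starMatrix_center_leaf_add_two hj, ih,
      show (τ + 2 + 1) / 2 = (τ + 1) / 2 + 1 by omega]
    ring

theorem captureProb_starMatrix_leaf_leaf [Nontrivial α] {i j : α} (hi : i ≠ c) (hj : j ≠ c)
    (τ : ℕ) : captureProb (starMatrix c) τ i j = 1 - (1 - leafProb α) ^ (τ / 2) := by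
  cases τ with
  | zero => simp [captureProb]
  | succ τ => rw [captureProb_starMatrix_leaf_succ hi hj, captureProb_starMatrix_center_leaf hj]

theorem le_captureProb_starMatrix [Nontrivial α] {τ : ℕ} (hτ : 2 ≤ τ) (i j : α) :
    1 - (1 - leafProb α) ^ (τ / 2) ≤ captureProb (starMatrix c) τ i j := by
  have hq : 0 ≤ 1 - leafProb α := sub_nonneg.2 leafProb_le_one
  obtain ⟨m, rfl⟩ := Nat.exists_eq_add_of_le' hτ
  by_cases hj : j = c
  · subst hj
    have : captureProb (starMatrix j) (m + 2) i j = 1 := by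
      by_cases hi : i = j
      · subst hi; exact captureProb_starMatrix_center_center m
      · exact captureProb_starMatrix_leaf_center hi (m + 1)
    rw [this]
    linarith [pow_nonneg hq ((m + 2) / 2)]
  by_cases hi : i = c
  · subst hi
    rw [captureProb_starMatrix_center_leaf hj]
    exact sub_le_sub_left (pow_le_pow_of_le_one hq (by linarith [leafProb_nonneg (α := α)])
      (by omega)) 1
  · rw [captureProb_starMatrix_leaf_leaf hi hj]

end Star

/-- Value of the optimal star-graph strategy: with center node `1` (index `⟨0,_⟩`),
`P*(1,1)=0`, `P*(1,j)=1/(n-1)`, `P*(j,1)=1` and `P*(j,k)=0` otherwise, `P*` is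
row-stochastic and the minimum capture probability equals
`1 - (1 - 1/(n-1))^{⌊τ/2⌋}`. -/
theorem stmt_11 (n τ : ℕ) (hn : 3 ≤ n) (hτ : 2 ≤ τ)
    (P : Matrix (Fin n) (Fin n) ℝ)
    (hP : ∀ i j : Fin n, P i j =
      if i = ⟨0, by omega⟩ then (if j = ⟨0, by omega⟩ then 0 else 1 / ((n : ℝ) - 1))
      else (if j = ⟨0, by omega⟩ then 1 else 0)) :
    (∀ i j, 0 ≤ P i j) ∧ (∀ i, ∑ j, P i j = 1) ∧
    Finset.univ.inf' ⟨((⟨0, by omega⟩ : Fin n), (⟨0, by omega⟩ : Fin n)), Finset.mem_univ _⟩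
        (fun p : Fin n × Fin n => ∑ t ∈ Finset.range τ, hitF P t p.1 p.2) =
      1 - (1 - 1 / ((n : ℝ) - 1)) ^ (τ / 2) := by
  have : Nontrivial (Fin n) := Fin.nontrivial_iff_two_le.2 (by omega)
  have hleafProb : leafProb (Fin n) = 1 / ((n : ℝ) - 1) := by simp [leafProb]
  obtain rfl : P = starMatrix ⟨0, by omega⟩ := by
    ext i j
    rw [hP, starMatrix, hleafProb]
  refine ⟨starMatrix_nonneg _, starMatrix_row_sum _, le_antisymm ?_ ?_⟩
  · have hleaf : (⟨1, by omega⟩ : Fin n) ≠ ⟨0, by omega⟩ := by simp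
    refine (inf'_le _ (mem_univ (⟨1, by omega⟩, ⟨1, by omega⟩))).trans_eq ?_
    rw [← hleafProb]
    exact captureProb_starMatrix_leaf_leaf hleaf hleaf τ
  · refine le_inf' _ _ fun p _ => ?_
    rw [← hleafProb]
    exact le_captureProb_starMatrix hτ p.1 p.2
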